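/- arXiv:2602.01432 — 2 statements merged into one kernel-verified Lean document; each statement's English description precedes it below -/
import Mathlib

section
/- Assume K is positive definite, LK − K is positive definite, and sup_{n≥0} K_n(s,s) < ∞ for every s ∈ X, where K₀ = K and K_{n+1} = L K_n. Then for all s,t ∈ X the limit K_∞(s,t) := lim_{n→∞} K_n(s,t) exists in ℂ, and K_∞ is a positive definite kernel. -/
/-!
`L` is linear and preserves positive definiteness, so the increments `K_{n+1} - K_n = Lⁿ (LK - K)`
are positive definite. Hence the diagonals `K_n(s,s)` increase and, being bounded, converge. For a
positive definite `J` the `2 × 2` Gram matrix at `s, t` gives `2 |J(s,t)| ≤ J(s,s) + J(t,t)`;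
applied to `J = K_q - K_p` this makes every sequence `K_n(s,t)` Cauchy. Positive definiteness
survives pointwise limits, since each Gram form is a finite sum.
-/

open scoped ComplexOrder

open Filter

def IsPD {X : Type*} (J : X → X → ℂ) : Prop :=
  ∀ (r : ℕ) (x : Fin r → X) (c : Fin r → ℂ),
    0 ≤ ∑ a, ∑ b, (starRingEnd ℂ) (c a) * c b * J (x a) (x b)

noncomputable def Lop {X : Type*} {m : ℕ} (φ : Fin m → X → X) (J : X → X → ℂ) : X → X → ℂ :=
  fun s t => ∑ i, J (φ i s) (φ i t)

open Topology

namespace IsPD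

variable {X : Type*}

lemma zero : IsPD (fun _ _ : X => (0 : ℂ)) := by
  intro r x c
  simp

lemma add {A B : X → X → ℂ} (hA : IsPD A) (hB : IsPD B) :
    IsPD (fun s t => A s t + B s t) := by
  intro r x c
  simpa only [mul_add, Finset.sum_add_distrib] using add_nonneg (hA r x c) (hB r x c)

lemma two_point {J : X → X → ℂ} (hJ : IsPD J) (s t : X) (α β : ℂ) :
    0 ≤ (starRingEnd ℂ) α * α * J s s + (starRingEnd ℂ) α * β * J s t +
      ((starRingEnd ℂ) β * α * J t s + (starRingEnd ℂ) β * β * J t t) := by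
  simpa [Fin.sum_univ_two] using hJ 2 ![s, t] ![α, β]

lemma diag_nonneg {J : X → X → ℂ} (hJ : IsPD J) (s : X) : 0 ≤ J s s := by
  simpa using hJ 1 ![s] ![1]

lemma apply_comm {J : X → X → ℂ} (hJ : IsPD J) (s t : X) :
    J t s = (starRingEnd ℂ) (J s t) := by
  have hs := (Complex.le_def.1 (hJ.diag_nonneg s)).2
  have ht := (Complex.le_def.1 (hJ.diag_nonneg t)).2
  have h₁ := (Complex.le_def.1 (hJ.two_point s t 1 1)).2
  have h₂ := (Complex.le_def.1 (hJ.two_point s t 1 Complex.I)).2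
  simp only [map_one, one_mul, mul_one, Complex.conj_I, Complex.zero_im, Complex.add_im,
    Complex.mul_im, Complex.neg_im, Complex.I_re, Complex.I_im, neg_mul, Complex.mul_re]
    at hs ht h₁ h₂
  apply Complex.ext <;> simp only [Complex.conj_re, Complex.conj_im] <;> linarith

lemma two_mul_norm_le {J : X → X → ℂ} (hJ : IsPD J) (s t : X) :
    2 * ‖J s t‖ ≤ (J s s).re + (J t t).re := by
  obtain ⟨u, hu, hnorm⟩ := Complex.exists_norm_eq_mul_self (J s t)
  -- test the Gram form on `(1, -u)`, where `u` rotates `J s t` onto the positive real axis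
  have h := (Complex.le_def.1 (hJ.two_point s t 1 (-u))).1
  have huu : (starRingEnd ℂ) u * u = 1 := by
    rw [Complex.conj_mul', hu]
    norm_num
  have hts : (starRingEnd ℂ) u * J t s = ‖J s t‖ := by
    rw [hJ.apply_comm, ← map_mul, ← hnorm, Complex.conj_ofReal]
  simp only [map_one, one_mul, mul_one, map_neg, neg_mul, mul_neg, neg_neg, huu, ← hnorm, hts,
    Complex.add_re, Complex.neg_re, Complex.ofReal_re, Complex.zero_re] at h
  linarith

lemma of_tendsto {ι : Type*} {l : Filter ι} [l.NeBot] {J : ι → X → X → ℂ} {J' : X → X → ℂ}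
    (hJ : ∀ i, IsPD (J i)) (hlim : ∀ s t, Tendsto (fun i => J i s t) l (𝓝 (J' s t))) :
    IsPD J' := fun r x c =>
  ge_of_tendsto'
    (tendsto_finsetSum _ fun _ _ => tendsto_finsetSum _ fun _ _ => (hlim _ _).const_mul _)
    fun i => hJ i r x c

lemma sub_of_le {J : ℕ → X → X → ℂ} (hinc : ∀ n, IsPD (fun s t => J (n + 1) s t - J n s t))
    {p q : ℕ} (hpq : p ≤ q) : IsPD (fun s t => J q s t - J p s t) := by
  induction q, hpq using Nat.le_induction with
  | base => simpa only [sub_self] using zero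
  | succ q _ ih => simpa only [sub_add_sub_cancel] using (hinc q).add ih

lemma monotone_diag_re {J : ℕ → X → X → ℂ}
    (hinc : ∀ n, IsPD (fun s t => J (n + 1) s t - J n s t)) (s : X) :
    Monotone fun n => (J n s s).re :=
  monotone_nat_of_le_succ fun n => (Complex.le_def.1 (sub_nonneg.1 ((hinc n).diag_nonneg s))).1

end IsPD

lemma cauchySeq_of_dist_le_dist {α : Type*} [PseudoMetricSpace α] {f : ℕ → α} {b : ℕ → ℝ}
    (hb : CauchySeq b) (h : ∀ p q, dist (f p) (f q) ≤ dist (b p) (b q)) : CauchySeq f :=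
  Metric.cauchySeq_iff.2 fun ε hε =>
    (Metric.cauchySeq_iff.1 hb ε hε).imp fun _ hN p hp q hq => (h p q).trans_lt (hN p hp q hq)

theorem exists_tendsto_of_isPD_increments {X : Type*} {J : ℕ → X → X → ℂ}
    (hinc : ∀ n, IsPD (fun s t => J (n + 1) s t - J n s t))
    (hbdd : ∀ s : X, ∃ C : ℝ, ∀ n : ℕ, (J n s s).re ≤ C) (s t : X) :
    ∃ l : ℂ, Tendsto (fun n => J n s t) atTop (𝓝 l) := by
  set b : ℕ → ℝ := fun n => (J n s s).re + (J n t t).re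
  have hb_mono : Monotone b := fun p q hpq =>
    add_le_add (IsPD.monotone_diag_re hinc s hpq) (IsPD.monotone_diag_re hinc t hpq)
  have hb_bdd : BddAbove (Set.range b) := by
    obtain ⟨Cs, hCs⟩ := hbdd s
    obtain ⟨Ct, hCt⟩ := hbdd t
    exact ⟨Cs + Ct, Set.forall_mem_range.2 fun n => add_le_add (hCs n) (hCt n)⟩
  have hdist : ∀ p q, dist (J p s t) (J q s t) ≤ dist (b p) (b q) := by
    intro p q
    wlog hpq : p ≤ q generalizing p q
    · rw [dist_comm, dist_comm (b p)]
      exact this q p (le_of_not_ge hpq)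
    have h := (IsPD.sub_of_le hinc hpq).two_mul_norm_le s t
    simp only [Complex.sub_re] at h
    rw [dist_comm, Complex.dist_eq, Real.dist_eq, abs_sub_comm]
    linarith [norm_nonneg (J q s t - J p s t), le_abs_self (b q - b p)]
  exact cauchySeq_tendsto_of_complete
    (cauchySeq_of_dist_le_dist (tendsto_atTop_ciSup hb_mono hb_bdd).cauchySeq hdist)

section Lop

variable {X : Type*} {m : ℕ} (φ : Fin m → X → X)

lemma lop_sub (A B : X → X → ℂ) :
    Lop φ (fun s t => A s t - B s t) = fun s t => Lop φ A s t - Lop φ B s t := by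
  funext s t
  simp only [Lop, Finset.sum_sub_distrib]

lemma iterate_lop_sub (A B : X → X → ℂ) (n : ℕ) :
    (Lop φ)^[n] (fun s t => A s t - B s t) =
      fun s t => (Lop φ)^[n] A s t - (Lop φ)^[n] B s t := by
  induction n with
  | zero => rfl
  | succ n ih => simp only [Function.iterate_succ_apply', ih, lop_sub]

lemma IsPD.lop {J : X → X → ℂ} (hJ : IsPD J) : IsPD (Lop φ J) := by
  intro r x c
  have h : ∑ a, ∑ b, (starRingEnd ℂ) (c a) * c b * Lop φ J (x a) (x b) =
      ∑ i : Fin m, ∑ a, ∑ b, (starRingEnd ℂ) (c a) * c b * J (φ i (x a)) (φ i (x b)) := by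
    simp only [Lop, Finset.mul_sum]
    exact (Finset.sum_congr rfl fun _ _ => Finset.sum_comm).trans Finset.sum_comm
  rw [h]
  exact Finset.sum_nonneg fun i _ => hJ r (fun a => φ i (x a)) c

lemma IsPD.iterate_lop {J : X → X → ℂ} (hJ : IsPD J) (n : ℕ) : IsPD ((Lop φ)^[n] J) := by
  induction n with
  | zero => exact hJ
  | succ n ih => simpa only [Function.iterate_succ_apply'] using ih.lop φ

end Lop

/-- under subinvariance and diagonal boundedness, the tower
`K_n = Lⁿ K` converges pointwise to a positive definite kernel `K_∞`. -/
theorem limit_kernel_exists {X : Type*} {m : ℕ} (φ : Fin m → X → X)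
    (K : X → X → ℂ) (hK : IsPD K)
    (hsub : IsPD (fun s t => Lop φ K s t - K s t))
    (hbdd : ∀ s : X, ∃ C : ℝ, ∀ n : ℕ, (((Lop φ)^[n] K) s s).re ≤ C) :
    ∃ Kinf : X → X → ℂ, IsPD Kinf ∧
      ∀ s t : X, Tendsto (fun n => ((Lop φ)^[n] K) s t) atTop (nhds (Kinf s t)) := by
  have hinc : ∀ n, IsPD (fun s t => (Lop φ)^[n + 1] K s t - (Lop φ)^[n] K s t) := fun n => by
    simp only [Function.iterate_succ_apply]
    rw [← iterate_lop_sub]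
    exact hsub.iterate_lop φ n
  choose Kinf hKinf using
    exists_tendsto_of_isPD_increments (J := fun n => (Lop φ)^[n] K) hinc hbdd
  exact ⟨Kinf, IsPD.of_tendsto (hK.iterate_lop φ) hKinf, hKinf⟩
end

section
/- In the prefixing example with parameters 0 < r < 1, 0 < c < 1, η > 0, let E(u,v) := c·r^{|u|}·m^{−|u|}·δ_{u,v} and K := J₀ + η·J₁ − E. Then LE = r·E, K is positive definite, LK − K = (1−r)·E is positive definite and nonzero, the iterates satisfy Lⁿ K = J₀ + η J₁ − rⁿ E, and consequently K_n converges pointwise to K_∞ = J₀ + η J₁ with sup_n K_n(s,s) ≤ (1+η)·m^{−|s|} < ∞ for every word s. -/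
open scoped ComplexOrder

open Filter

def prefixMap (m : ℕ) (i : Fin m) (w : List (Fin m)) : List (Fin m) := i :: w

noncomputable def J0 (m : ℕ) (u v : List (Fin m)) : ℂ :=
  if u = v then ((m : ℂ) ^ u.length)⁻¹ else 0

noncomputable def J1 (m : ℕ) (u v : List (Fin m)) : ℂ :=
  (((m : ℝ) ^ (-(((u.length : ℝ) + (v.length : ℝ)) / 2)) : ℝ) : ℂ)

/-- `E(u,v) = c·r^{|u|}·m^{-|u|}·δ_{u,v}`. -/
noncomputable def Eker (m : ℕ) (c r : ℝ) (u v : List (Fin m)) : ℂ :=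
  if u = v then ((c * r ^ u.length / (m : ℝ) ^ u.length : ℝ) : ℂ) else 0

/-- `K = J₀ + η J₁ − E`. -/
noncomputable def Kex (m : ℕ) (c r η : ℝ) (u v : List (Fin m)) : ℂ :=
  J0 m u v + (η : ℂ) * J1 m u v - Eker m c r u v

/-!
The branching operator `L` fixes `J₀` and `J₁` (the `m` children `i :: u` each carry `1/m` of the
weight of `u`) and multiplies `E` by `r` (one more letter costs an extra factor `r`). Since `L` is
linear, `Lⁿ K = J₀ + η J₁ − rⁿ E`, and the remaining claims are read off this formula. Positive
definiteness of `K` comes from the splitting `K = (J₀ − E) + η J₁`: `J₀ − E` is diagonal with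
entries `(1 − c rᵏ) m⁻ᵏ ≥ 0` and `J₁ u v = g u · g v` with `g u = m^(-|u|/2)`; diagonal kernels are
Gram kernels of the orthogonal family `lp.single 2 u` in `ℓ²`, and rank-one kernels those of `g`
in `ℂ`.
-/

open scoped InnerProductSpace ComplexConjugate

section PositiveDefinite

variable {X : Type*}

theorem IsPD.add_s19 {J K : X → X → ℂ} (hJ : IsPD J) (hK : IsPD K) : IsPD (J + K) := by
  intro n x c
  simpa only [Pi.add_apply, mul_add, Finset.sum_add_distrib] using add_nonneg (hJ n x c) (hK n x c)

theorem IsPD.const_smul {J : X → X → ℂ} (hJ : IsPD J) {t : ℂ} (ht : 0 ≤ t) : IsPD (t • J) := by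
  intro n x c
  simpa only [Pi.smul_apply, smul_eq_mul, Finset.mul_sum, mul_left_comm t] using
    mul_nonneg ht (hJ n x c)

theorem isPD_inner {E : Type*} [NormedAddCommGroup E] [InnerProductSpace ℂ E] (g : X → E) :
    IsPD fun u v => ⟪g u, g v⟫_ℂ := by
  intro n x c
  have hgram : ∑ a, ∑ b, conj (c a) * c b * ⟪g (x a), g (x b)⟫_ℂ
      = ⟪∑ a, c a • g (x a), ∑ b, c b • g (x b)⟫_ℂ := by
    simp only [sum_inner, inner_smul_left]
    simp only [inner_sum, inner_smul_right, Finset.mul_sum, mul_assoc]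
  rw [hgram, ← inner_self_ofReal_re]
  exact RCLike.ofReal_nonneg.mpr inner_self_nonneg

theorem isPD_ofReal_mul (g : X → ℝ) : IsPD fun u v => ((g u * g v : ℝ) : ℂ) := by
  simpa [RCLike.inner_apply, Complex.conj_ofReal, mul_comm] using isPD_inner fun u => (g u : ℂ)

theorem isPD_ite_eq [DecidableEq X] (f : X → ℝ) (hf : ∀ u, 0 ≤ f u) :
    IsPD fun u v => if u = v then (f u : ℂ) else 0 := by
  convert isPD_inner fun u => lp.single 2 u (√(f u) : ℂ) (E := fun _ : X => ℂ) using 3 with u v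
  rw [lp.inner_single_left, lp.single_apply]
  split_ifs with huv
  · subst huv
    rw [Pi.single_eq_same, RCLike.inner_apply, Complex.conj_ofReal, ← Complex.ofReal_mul,
      Real.mul_self_sqrt (hf u)]
  · rw [Pi.single_eq_of_ne huv, inner_zero_right]

end PositiveDefinite

theorem LinearMap.iterate_sub_of_apply_eq_smul {R M : Type*} [Ring R] [AddCommGroup M]
    [Module R M] (f : M →ₗ[R] M) {a e : M} {r : R} (ha : f a = a) (he : f e = r • e) (n : ℕ) :
    f^[n] (a - e) = a - r ^ n • e := by
  induction n with
  | zero => simp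
  | succ n ih =>
    rw [Function.iterate_succ_apply', ih, map_sub, map_smul, ha, he, smul_smul, pow_succ]

noncomputable def Lop.linearMap {X : Type*} {m : ℕ} (φ : Fin m → X → X) :
    (X → X → ℂ) →ₗ[ℂ] X → X → ℂ where
  toFun := Lop φ
  map_add' J K := by ext s t; simp only [Lop, Pi.add_apply, Finset.sum_add_distrib]
  map_smul' a J := by ext s t; simp only [Lop, Pi.smul_apply, smul_eq_mul, Finset.mul_sum,
    RingHom.id_apply]

section Prefix

variable {m : ℕ}

theorem Lop_prefixMap_J0 (hm : m ≠ 0) : Lop (prefixMap m) (J0 m) = J0 m := by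
  ext u v
  simp only [Lop, prefixMap, J0, List.cons.injEq, true_and, List.length_cons]
  split_ifs
  · simp only [pow_succ, mul_inv_rev, Finset.sum_const, Finset.card_univ, Fintype.card_fin,
      nsmul_eq_mul]
    field_simp
  · simp

theorem Lop_prefixMap_J1 (hm : m ≠ 0) : Lop (prefixMap m) (J1 m) = J1 m := by
  ext u v
  have hm' : (0 : ℝ) < m := by positivity
  have hshift : (m : ℝ) ^ (-((((u.length + 1 : ℕ) : ℝ) + ((v.length + 1 : ℕ) : ℝ)) / 2))
      = (m : ℝ) ^ (-(((u.length : ℝ) + (v.length : ℝ)) / 2)) / m := by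
    rw [div_eq_mul_inv _ (m : ℝ), ← Real.rpow_neg_one, ← Real.rpow_add hm']
    push_cast
    ring_nf
  simp only [Lop, prefixMap, J1, List.length_cons, Finset.sum_const, Finset.card_univ,
    Fintype.card_fin, nsmul_eq_mul]
  rw [hshift, Complex.ofReal_div, Complex.ofReal_natCast]
  field_simp

theorem Lop_prefixMap_Eker (hm : m ≠ 0) (c r : ℝ) :
    Lop (prefixMap m) (Eker m c r) = (r : ℂ) • Eker m c r := by
  ext u v
  simp only [Lop, prefixMap, Eker, List.cons.injEq, true_and, List.length_cons, Pi.smul_apply,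
    smul_eq_mul]
  split_ifs
  · simp only [pow_succ, Complex.ofReal_div, Complex.ofReal_mul, Complex.ofReal_pow,
      Complex.ofReal_natCast, Finset.sum_const, Finset.card_univ, Fintype.card_fin, nsmul_eq_mul]
    field_simp
  · simp

theorem J1_eq_ofReal_mul (hm : m ≠ 0) :
    J1 m = fun u v =>
      (((m : ℝ) ^ (-(u.length : ℝ) / 2) * (m : ℝ) ^ (-(v.length : ℝ) / 2) : ℝ) : ℂ) := by
  ext u v
  rw [J1, ← Real.rpow_add (by positivity)]
  ring_nf

theorem J0_sub_Eker (c r : ℝ) :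
    J0 m - Eker m c r
      = fun u v => if u = v then (((1 - c * r ^ u.length) / (m : ℝ) ^ u.length : ℝ) : ℂ) else 0 := by
  ext u v
  simp only [Pi.sub_apply, J0, Eker]
  split_ifs
  · push_cast
    ring
  · simp

theorem Kex_eq_sub (c r η : ℝ) : Kex m c r η = J0 m + (η : ℂ) • J1 m - Eker m c r := rfl

theorem isPD_Eker {c r : ℝ} (hc : 0 ≤ c) (hr : 0 ≤ r) : IsPD (Eker m c r) := by
  unfold Eker
  exact isPD_ite_eq _ fun _ => by positivity

theorem isPD_Kex (hm : m ≠ 0) {c r η : ℝ} (hr0 : 0 ≤ r) (hr1 : r ≤ 1) (hc : c ≤ 1)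
    (hη : 0 ≤ η) : IsPD (Kex m c r η) := by
  have hdiag : IsPD (J0 m - Eker m c r) := by
    rw [J0_sub_Eker]
    refine isPD_ite_eq _ fun u => div_nonneg ?_ (by positivity)
    have : r ^ u.length ≤ 1 := pow_le_one₀ hr0 hr1
    nlinarith [pow_nonneg hr0 u.length]
  have hJ1 : IsPD (J1 m) := by
    rw [J1_eq_ofReal_mul hm]
    exact isPD_ofReal_mul _
  rw [Kex_eq_sub, add_sub_right_comm]
  exact hdiag.add_s19 (hJ1.const_smul (Complex.zero_le_real.mpr hη))

theorem iterate_Lop_prefixMap_Kex (hm : m ≠ 0) (c r η : ℝ) (n : ℕ) :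
    (Lop (prefixMap m))^[n] (Kex m c r η)
      = J0 m + (η : ℂ) • J1 m - (r : ℂ) ^ n • Eker m c r := by
  rw [Kex_eq_sub]
  refine (Lop.linearMap (prefixMap m)).iterate_sub_of_apply_eq_smul ?_
    (Lop_prefixMap_Eker hm c r) n
  change Lop.linearMap (prefixMap m) (J0 m + (η : ℂ) • J1 m) = _
  rw [map_add, map_smul]
  change Lop (prefixMap m) (J0 m) + (η : ℂ) • Lop (prefixMap m) (J1 m) = _
  rw [Lop_prefixMap_J0 hm, Lop_prefixMap_J1 hm]

theorem Lop_prefixMap_Kex_sub (hm : m ≠ 0) (c r η : ℝ) :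
    Lop (prefixMap m) (Kex m c r η) - Kex m c r η = ((1 - r : ℝ) : ℂ) • Eker m c r := by
  rw [← Function.iterate_one (Lop (prefixMap m)), iterate_Lop_prefixMap_Kex hm, Kex_eq_sub]
  push_cast
  module

theorem tendsto_iterate_Lop_prefixMap_Kex (hm : m ≠ 0) (c η : ℝ) {r : ℝ} (hr : |r| < 1)
    (s t : List (Fin m)) :
    Tendsto (fun n => (Lop (prefixMap m))^[n] (Kex m c r η) s t) atTop
      (nhds (J0 m s t + (η : ℂ) * J1 m s t)) := by
  have hpow : Tendsto (fun n => (r : ℂ) ^ n) atTop (nhds 0) :=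
    tendsto_pow_atTop_nhds_zero_of_norm_lt_one (by rwa [Complex.norm_real])
  simpa [iterate_Lop_prefixMap_Kex hm] using
    (hpow.mul_const (Eker m c r s t)).const_sub (J0 m s t + (η : ℂ) * J1 m s t)

theorem J1_self (s : List (Fin m)) : J1 m s s = ((m : ℂ) ^ s.length)⁻¹ := by
  rw [J1, show -(((s.length : ℝ) + s.length) / 2) = -(s.length : ℝ) by ring,
    Real.rpow_neg (Nat.cast_nonneg m), Real.rpow_natCast]
  push_cast
  rfl

theorem re_iterate_Lop_prefixMap_Kex_self_le (hm : m ≠ 0) {c r : ℝ} (hc : 0 ≤ c) (hr : 0 ≤ r)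
    (η : ℝ) (n : ℕ) (s : List (Fin m)) :
    ((Lop (prefixMap m))^[n] (Kex m c r η) s s).re ≤ (1 + η) / (m : ℝ) ^ s.length := by
  have hdiag : (Lop (prefixMap m))^[n] (Kex m c r η) s s
      = (((1 + η) / (m : ℝ) ^ s.length
          - r ^ n * (c * r ^ s.length / (m : ℝ) ^ s.length) : ℝ) : ℂ) := by
    simp only [iterate_Lop_prefixMap_Kex hm, Pi.sub_apply, Pi.add_apply, Pi.smul_apply,
      smul_eq_mul, J1_self, J0, Eker, if_true]
    push_cast
    ring
  rw [hdiag, Complex.ofReal_re, sub_le_self_iff]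
  positivity

end Prefix

/-- in the prefixing example, `LE = r·E`, `K` is positive
definite, `LK − K = (1−r)·E` is positive definite and nonzero,
`Lⁿ K = J₀ + η J₁ − rⁿ E`, the tower converges pointwise to `J₀ + η J₁`, and
the diagonals are bounded by `(1+η)·m^{-|s|}`. -/
theorem prefix_example_full (m : ℕ) (hm : 2 ≤ m) (c r η : ℝ)
    (hr0 : 0 < r) (hr1 : r < 1) (hc0 : 0 < c) (hc1 : c < 1) (hη : 0 < η) :
    Lop (prefixMap m) (Eker m c r) = (fun u v => (r : ℂ) * Eker m c r u v) ∧
    IsPD (Kex m c r η) ∧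
    (fun u v => Lop (prefixMap m) (Kex m c r η) u v - Kex m c r η u v)
      = (fun u v => ((1 - r : ℝ) : ℂ) * Eker m c r u v) ∧
    IsPD (fun u v => ((1 - r : ℝ) : ℂ) * Eker m c r u v) ∧
    (fun u v => ((1 - r : ℝ) : ℂ) * Eker m c r u v) ≠ (fun _ _ => (0 : ℂ)) ∧
    (∀ n : ℕ, (Lop (prefixMap m))^[n] (Kex m c r η)
      = fun u v => J0 m u v + (η : ℂ) * J1 m u v - (r : ℂ) ^ n * Eker m c r u v) ∧
    (∀ s t : List (Fin m),
      Tendsto (fun n => ((Lop (prefixMap m))^[n] (Kex m c r η)) s t) atTop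
        (nhds (J0 m s t + (η : ℂ) * J1 m s t))) ∧
    (∀ (n : ℕ) (s : List (Fin m)),
      (((Lop (prefixMap m))^[n] (Kex m c r η)) s s).re
        ≤ (1 + η) / (m : ℝ) ^ s.length) := by
  have hm0 : m ≠ 0 := (two_pos.trans_le hm).ne'
  have hE_ne : ((1 - r : ℝ) : ℂ) • Eker m c r ≠ 0 := by
    intro h
    have h0 := congrFun₂ h [] []
    simp only [Eker, Pi.smul_apply, smul_eq_mul, if_true, List.length_nil, pow_zero, mul_one,
      div_one, Pi.zero_apply, ← Complex.ofReal_mul, Complex.ofReal_eq_zero, mul_eq_zero] at h0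
    rcases h0 with h0 | h0 <;> linarith
  exact ⟨Lop_prefixMap_Eker hm0 c r, isPD_Kex hm0 hr0.le hr1.le hc1.le hη.le,
    Lop_prefixMap_Kex_sub hm0 c r η,
    (isPD_Eker hc0.le hr0.le).const_smul (Complex.zero_le_real.mpr (by linarith)), hE_ne,
    iterate_Lop_prefixMap_Kex hm0 c r η,
    tendsto_iterate_Lop_prefixMap_Kex hm0 c η (by rwa [abs_of_pos hr0]),
    re_iterate_Lop_prefixMap_Kex_self_le hm0 hc0.le hr0.le η⟩
end
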